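/- arXiv:0806.0681 — 3 statements merged into one kernel-verified Lean document; each statement's English description precedes it below -/
import Mathlib

section
/- The number of ordered factorizations of n into k factors each at least 2 is bounded above by m^m, where m is the number of prime factors of n counted with multiplicity (summing over all k ≥ 2, with each individual factorization counted once). -/
/-!
Tag every prime factor of every entry `nᵢ` with its position `i`. Since each `nᵢ ≥ 2` has a
prime factor, the multiset of tagged primes determines the factorization, and its tags are
`< k ≤ m`. Listing the prime factors of `n` in a fixed order `p₁, …, pₘ`, such a multiset is
determined by the function sending `j` to the tag of `pⱼ`, so there are at most `m ^ m` of them.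
-/

namespace List

variable {α β : Type*}

def taggedSum (F : α → Multiset β) : List α → Multiset (β × ℕ)
  | [] => 0
  | a :: l => (F a).map (·, 0) + (taggedSum F l).map (Prod.map id Nat.succ)

variable (F : α → Multiset β)

theorem taggedSum_cons (a : α) (l : List α) :
    taggedSum F (a :: l) = (F a).map (·, 0) + (taggedSum F l).map (Prod.map id Nat.succ) := rfl

theorem map_fst_taggedSum (l : List α) : (taggedSum F l).map Prod.fst = (l.map F).sum := by
  induction l with
  | nil => rfl
  | cons a l ih => simp [taggedSum_cons, Multiset.map_map, ← ih]

theorem snd_lt_length_of_mem_taggedSum {l : List α} {x : β × ℕ} (hx : x ∈ taggedSum F l) :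
    x.2 < l.length := by
  induction l generalizing x with
  | nil => exact (Multiset.notMem_zero x hx).elim
  | cons a l ih =>
    simp only [taggedSum_cons, Multiset.mem_add, Multiset.mem_map] at hx
    rcases hx with ⟨b, -, rfl⟩ | ⟨y, hy, rfl⟩
    · simp
    · simpa using ih hy

theorem filter_snd_eq_zero_taggedSum_cons (a : α) (l : List α) :
    (taggedSum F (a :: l)).filter (·.2 = 0) = (F a).map (·, 0) := by
  rw [taggedSum_cons, Multiset.filter_add, Multiset.filter_eq_self.2 (by simp),
    Multiset.filter_eq_nil.2 fun _ hy => ?_, add_zero]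
  obtain ⟨y, -, rfl⟩ := Multiset.mem_map.1 hy
  simp

theorem filter_snd_ne_zero_taggedSum_cons (a : α) (l : List α) :
    (taggedSum F (a :: l)).filter (·.2 ≠ 0) = (taggedSum F l).map (Prod.map id Nat.succ) := by
  rw [taggedSum_cons, Multiset.filter_add, Multiset.filter_eq_nil.2 (by simp),
    Multiset.filter_eq_self.2 fun _ hy => ?_, zero_add]
  obtain ⟨y, -, rfl⟩ := Multiset.mem_map.1 hy
  simp

theorem taggedSum_cons_ne_zero {a : α} (ha : F a ≠ 0) (l : List α) :
    taggedSum F (a :: l) ≠ 0 := by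
  simp [taggedSum_cons, ha]

theorem taggedSum_injOn {s : Set α} (hF : s.InjOn F) (hF0 : ∀ a ∈ s, F a ≠ 0) :
    {l : List α | ∀ a ∈ l, a ∈ s}.InjOn (taggedSum F) := by
  intro l hl l' hl' h
  induction l generalizing l' with
  | nil =>
    cases l' with
    | nil => rfl
    | cons a' l' =>
      exact absurd h.symm (taggedSum_cons_ne_zero F (hF0 a' (hl' a' mem_cons_self)) l')
  | cons a l ih =>
    cases l' with
    | nil => exact absurd h (taggedSum_cons_ne_zero F (hF0 a (hl a mem_cons_self)) l)
    | cons a' l' =>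
      have hhead := congrArg (Multiset.filter (·.2 = 0)) h
      have htail := congrArg (Multiset.filter (·.2 ≠ 0)) h
      simp only [filter_snd_eq_zero_taggedSum_cons, filter_snd_ne_zero_taggedSum_cons]
        at hhead htail
      have ha : a = a' := hF (hl a mem_cons_self) (hl' a' mem_cons_self)
        (Multiset.map_injective (Prod.mk_left_injective 0) hhead)
      have htl : l = l' := ih (fun b hb => hl b (mem_cons_of_mem a hb))
        (fun b hb => hl' b (mem_cons_of_mem a' hb))
        (Multiset.map_injective (Function.injective_id.prodMap Nat.succ_injective) htail)
      rw [ha, htl]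

theorem length_le_card_sum_map {l : List α} (hF0 : ∀ a ∈ l, F a ≠ 0) :
    l.length ≤ Multiset.card (l.map F).sum := by
  induction l with
  | nil => simp
  | cons a l ih =>
    simp only [length_cons, map_cons, sum_cons, Multiset.card_add]
    have := Multiset.card_pos.2 (hF0 a mem_cons_self)
    have := ih fun b hb => hF0 b (mem_cons_of_mem a hb)
    omega

end List

namespace Multiset

variable {α β : Type*}

theorem exists_eq_ofFn_of_map_fst_eq {M : Multiset (α × β)} {p : List α}
    (h : M.map Prod.fst = p) :
    ∃ g : Fin p.length → β, M = List.ofFn fun j => (p.get j, g j) := by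
  induction p generalizing M with
  | nil => exact ⟨Fin.elim0, by simpa using h⟩
  | cons a p ih =>
    obtain ⟨x, hx, rfl⟩ : ∃ x ∈ M, x.1 = a := Multiset.mem_map.1 (h ▸ by simp)
    obtain ⟨N, rfl⟩ := Multiset.exists_cons_of_mem hx
    obtain ⟨g, rfl⟩ := ih ((Multiset.cons_inj_right x.1).1 (by simpa using h))
    exact ⟨Fin.cons x.2 g, by simp [List.ofFn_succ]⟩

theorem ncard_le_pow_of_map_fst_eq {p : List α} {k : ℕ} {T : Set (Multiset (α × ℕ))}
    (hT : ∀ M ∈ T, M.map Prod.fst = p ∧ ∀ x ∈ M, x.2 < k) : T.ncard ≤ k ^ p.length := by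
  let decode : (Fin p.length → Fin k) → Multiset (α × ℕ) :=
    fun g => List.ofFn fun j => (p.get j, (g j : ℕ))
  have hT_range : T ⊆ Set.range decode := by
    intro M hM
    obtain ⟨hfst, hlt⟩ := hT M hM
    obtain ⟨g, rfl⟩ := exists_eq_ofFn_of_map_fst_eq hfst
    exact ⟨fun j => ⟨g j, hlt (p.get j, g j) (mem_coe.2 (List.mem_ofFn.2 ⟨j, rfl⟩))⟩, rfl⟩
  calc T.ncard ≤ (Set.range decode).ncard := Set.ncard_le_ncard hT_range (Set.finite_range _)
    _ ≤ Nat.card (Fin p.length → Fin k) := by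
      rw [← Set.image_univ, ← Set.ncard_univ]
      exact Set.ncard_image_le
    _ = k ^ p.length := by simp

end Multiset

theorem Nat.sum_map_primeFactorsList {l : List ℕ} (hl : ∀ a ∈ l, a ≠ 0) :
    (l.map fun a => (a.primeFactorsList : Multiset ℕ)).sum = l.prod.primeFactorsList := by
  induction l with
  | nil => simp
  | cons a l ih =>
    rw [List.map_cons, List.sum_cons, ih fun b hb => hl b (List.mem_cons_of_mem a hb),
      List.prod_cons, Multiset.coe_add, Multiset.coe_eq_coe]
    exact (Nat.perm_primeFactorsList_mul (hl a List.mem_cons_self)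
      (List.prod_ne_zero fun h => hl 0 (List.mem_cons_of_mem a h) rfl)).symm

theorem stmt_3_general (n : ℕ) :
    {l : List ℕ | 2 ≤ l.length ∧ (∀ m ∈ l, 2 ≤ m) ∧ l.prod = n}.ncard
      ≤ n.primeFactorsList.length ^ n.primeFactorsList.length := by
  let F : ℕ → Multiset ℕ := fun a => a.primeFactorsList
  have hF : Set.InjOn F {a | 2 ≤ a} := fun a ha b hb hab =>
    Nat.eq_of_perm_primeFactorsList (by grind) (by grind) (Multiset.coe_eq_coe.1 hab)
  have hF0 : ∀ a ∈ {a : ℕ | 2 ≤ a}, F a ≠ 0 := fun a ha => by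
    simp only [F, ne_eq, Multiset.coe_eq_zero, Nat.primeFactorsList_eq_nil]
    grind
  have hinj : {l : List ℕ | 2 ≤ l.length ∧ (∀ m ∈ l, 2 ≤ m) ∧ l.prod = n}.InjOn
      (List.taggedSum F) :=
    Set.InjOn.mono (fun l hl => hl.2.1) (List.taggedSum_injOn F hF hF0)
  rw [← hinj.ncard_image]
  refine Multiset.ncard_le_pow_of_map_fst_eq ?_
  rintro _ ⟨l, ⟨-, hl, rfl⟩, rfl⟩
  have hsum : (l.map F).sum = l.prod.primeFactorsList :=
    Nat.sum_map_primeFactorsList fun a ha => by grind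
  refine ⟨by rw [List.map_fst_taggedSum, hsum], fun x hx => ?_⟩
  calc x.2 < l.length := List.snd_lt_length_of_mem_taggedSum F hx
    _ ≤ Multiset.card (l.map F).sum := List.length_le_card_sum_map F fun a ha => hF0 a (hl a ha)
    _ = _ := by rw [hsum]; rfl

/-- The number of ordered factorizations of `n` into `k ≥ 2` factors each `≥ 2`
(summed over all `k ≥ 2`) is at most `m^m`, where `m = Ω(n)` is the number of prime
factors of `n` counted with multiplicity. -/
theorem stmt_3 (n : ℕ) (hn : 2 ≤ n) :
    {l : List ℕ | 2 ≤ l.length ∧ (∀ m ∈ l, 2 ≤ m) ∧ l.prod = n}.ncard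
      ≤ n.primeFactorsList.length ^ n.primeFactorsList.length :=
  stmt_3_general n
end

section
/- For any field K, every triangular automorphism (ax + h(y), by + b₁) of K[x,y] can be written uniquely as (x + k(y), y)∘γ where k(y) ∈ y²K[y] and γ ∈ C = A ∩ B; explicitly k(y) = (1/a)(h_n y^n + ⋯ + h₂y²) where h(y) = h_n y^n + ⋯ + h₁y + h₀. -/
open MvPolynomial

/-- The endomorphism of `K[x,y]` corresponding to the pair `β = (x + k(y), y)`. -/
noncomputable def betaHom {K : Type*} [CommRing K] (k : Polynomial K) :
    MvPolynomial (Fin 2) K →ₐ[K] MvPolynomial (Fin 2) K :=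
  aeval ![X 0 + Polynomial.aeval (X 1 : MvPolynomial (Fin 2) K) k, X 1]

/-- The endomorphism of `K[x,y]` corresponding to the affine pair
`(a₁x + b₁y + c₁, a₂x + b₂y + c₂)`. -/
noncomputable def lamHom {K : Type*} [CommRing K] (a₁ b₁ c₁ a₂ b₂ c₂ : K) :
    MvPolynomial (Fin 2) K →ₐ[K] MvPolynomial (Fin 2) K :=
  aeval ![C a₁ * X 0 + C b₁ * X 1 + C c₁, C a₂ * X 0 + C b₂ * X 1 + C c₂]

/-- The endomorphism of `K[x,y]` corresponding to the triangular pair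
`(ax + h(y), by + b₁)`. -/
noncomputable def triHom {K : Type*} [CommRing K] (a : K) (h : Polynomial K) (b b₁ : K) :
    MvPolynomial (Fin 2) K →ₐ[K] MvPolynomial (Fin 2) K :=
  aeval ![C a * X 0 + Polynomial.aeval (X 1 : MvPolynomial (Fin 2) K) h, C b * X 1 + C b₁]

/-- `φ` is an affine automorphism of `K[x,y]`. -/
def IsAffine {K : Type*} [CommRing K]
    (φ : MvPolynomial (Fin 2) K ≃ₐ[K] MvPolynomial (Fin 2) K) : Prop :=
  ∃ a₁ b₁ c₁ a₂ b₂ c₂ : K, a₁ * b₂ ≠ a₂ * b₁ ∧ φ.toAlgHom = lamHom a₁ b₁ c₁ a₂ b₂ c₂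

/-- `φ` is a triangular automorphism of `K[x,y]`. -/
def IsTriangular {K : Type*} [CommRing K]
    (φ : MvPolynomial (Fin 2) K ≃ₐ[K] MvPolynomial (Fin 2) K) : Prop :=
  ∃ (a b b₁ : K) (h : Polynomial K), a ≠ 0 ∧ b ≠ 0 ∧ φ.toAlgHom = triHom a h b b₁

section AuxLemmas

variable {K : Type*} [CommRing K]

@[simp] lemma betaHom_X0 (k : Polynomial K) :
    betaHom k (X 0) = X 0 + Polynomial.aeval (X 1 : MvPolynomial (Fin 2) K) k := by
  simp [betaHom]

@[simp] lemma betaHom_X1 (k : Polynomial K) : betaHom k (X 1 : MvPolynomial (Fin 2) K) = X 1 := by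
  simp [betaHom]

@[simp] lemma betaHom_aeval (k p : Polynomial K) :
    betaHom k (Polynomial.aeval (X 1 : MvPolynomial (Fin 2) K) p)
      = Polynomial.aeval (X 1 : MvPolynomial (Fin 2) K) p := by
  rw [← Polynomial.aeval_algHom_apply, betaHom_X1]

@[simp] lemma triHom_X0 (a : K) (h : Polynomial K) (b b₁ : K) :
    triHom a h b b₁ (X 0) = C a * X 0 + Polynomial.aeval (X 1 : MvPolynomial (Fin 2) K) h := by
  simp [triHom]

@[simp] lemma triHom_X1 (a : K) (h : Polynomial K) (b b₁ : K) :
    triHom a h b b₁ (X 1 : MvPolynomial (Fin 2) K) = C b * X 1 + C b₁ := by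
  simp [triHom]

@[simp] lemma lamHom_X0 (a₁ b₁ c₁ a₂ b₂ c₂ : K) :
    lamHom a₁ b₁ c₁ a₂ b₂ c₂ (X 0) = C a₁ * X 0 + C b₁ * X 1 + C c₁ := by
  simp [lamHom]

@[simp] lemma lamHom_X1 (a₁ b₁ c₁ a₂ b₂ c₂ : K) :
    lamHom a₁ b₁ c₁ a₂ b₂ c₂ (X 1 : MvPolynomial (Fin 2) K) = C a₂ * X 0 + C b₂ * X 1 + C c₂ := by
  simp [lamHom]

lemma betaHom_comp (k k' : Polynomial K) :
    (betaHom k).comp (betaHom k') = betaHom (k + k') := by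
  refine MvPolynomial.algHom_ext fun i => ?_
  fin_cases i <;> simp [map_add] <;> ring

lemma betaHom_zero : betaHom (0 : Polynomial K) = AlgHom.id K _ := by
  refine MvPolynomial.algHom_ext fun i => ?_
  fin_cases i <;> simp

/-- `betaHom k` as an algebra automorphism. -/
noncomputable def betaEquiv (k : Polynomial K) :
    MvPolynomial (Fin 2) K ≃ₐ[K] MvPolynomial (Fin 2) K :=
  AlgEquiv.ofAlgHom (betaHom k) (betaHom (-k))
    (by rw [betaHom_comp]; simp [betaHom_zero]) (by rw [betaHom_comp]; simp [betaHom_zero])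

/-- projection sending X0 ↦ 0, X1 ↦ X. -/
noncomputable def piY (K : Type*) [CommRing K] : MvPolynomial (Fin 2) K →ₐ[K] Polynomial K :=
  aeval ![0, Polynomial.X]

@[simp] lemma piY_X0 : piY K (X 0) = 0 := by simp [piY]
@[simp] lemma piY_X1 : piY K (X 1) = Polynomial.X := by simp [piY]
@[simp] lemma piY_aeval (p : Polynomial K) :
    piY K (Polynomial.aeval (X 1 : MvPolynomial (Fin 2) K) p) = p := by
  rw [← Polynomial.aeval_algHom_apply, piY_X1, Polynomial.aeval_X_left_apply]

/-- evaluation X0 ↦ 1, X1 ↦ 0. -/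
noncomputable def evP (K : Type*) [CommRing K] : MvPolynomial (Fin 2) K →ₐ[K] K :=
  aeval ![1, 0]

@[simp] lemma evP_X0 : evP K (X 0) = 1 := by simp [evP]
@[simp] lemma evP_X1 : evP K (X 1) = 0 := by simp [evP]
@[simp] lemma evP_aeval (p : Polynomial K) :
    evP K (Polynomial.aeval (X 1 : MvPolynomial (Fin 2) K) p) = Polynomial.aeval (0 : K) p := by
  rw [← Polynomial.aeval_algHom_apply, evP_X1]

end AuxLemmas

lemma key_lemma {K : Type*} [Field K] (a b b₁ : K) (h : Polynomial K) (ha : a ≠ 0)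
    (k : Polynomial K) (γ : MvPolynomial (Fin 2) K ≃ₐ[K] MvPolynomial (Fin 2) K)
    (hk0 : k.coeff 0 = 0) (hk1 : k.coeff 1 = 0)
    (haff : IsAffine γ) (htri : IsTriangular γ)
    (heq : triHom a h b b₁ = (betaHom k).comp γ.toAlgHom) :
    k = Polynomial.C a⁻¹ *
      (h - Polynomial.C (h.coeff 1) * Polynomial.X - Polynomial.C (h.coeff 0)) := by
  obtain ⟨a', b', b₁', g, ha', hb', hγt⟩ := htri
  obtain ⟨a₁, bb₁, c₁, a₂, b₂, c₂, hdet, hγa⟩ := haff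
  have hg : g = Polynomial.C bb₁ * Polynomial.X + Polynomial.C c₁ := by
    have e1 : piY K (triHom a' g b' b₁' (X 0)) = piY K (lamHom a₁ bb₁ c₁ a₂ b₂ c₂ (X 0)) := by
      rw [← hγt, ← hγa]
    simpa using e1
  have eqh : h = Polynomial.C a' * k + g := by
    have e2 : piY K (triHom a h b b₁ (X 0)) = piY K ((betaHom k) (γ.toAlgHom (X 0))) := by
      rw [heq]; rfl
    rw [hγt] at e2
    simpa [mul_add] using e2
  have haa : a = a' := by
    have e3 : evP K (triHom a h b b₁ (X 0)) = evP K ((betaHom k) (γ.toAlgHom (X 0))) := by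
      rw [heq]; rfl
    rw [hγt] at e3
    simp [mul_add, map_add, map_mul] at e3
    have e4 := congrArg (Polynomial.aeval (0 : K)) eqh
    simp [map_add, map_mul] at e4
    linear_combination e3 - e4
  have c1 : h.coeff 1 = g.coeff 1 := by rw [eqh]; simp [hk1]
  have c0 : h.coeff 0 = g.coeff 0 := by rw [eqh]; simp [hk0]
  have hgid : g = Polynomial.C (g.coeff 1) * Polynomial.X + Polynomial.C (g.coeff 0) := by
    rw [hg]; simp
  have hsub : h - Polynomial.C (h.coeff 1) * Polynomial.X - Polynomial.C (h.coeff 0)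
      = Polynomial.C a * k := by
    rw [c1, c0, eqh, haa]
    linear_combination hgid
  rw [hsub, ← mul_assoc, ← Polynomial.C_mul, inv_mul_cancel₀ ha, Polynomial.C_1, one_mul]

/-- Every triangular automorphism `(ax + h(y), by + b₁)` of `K[x,y]` can be written
uniquely as `(x + k(y), y) ∘ γ` with `k ∈ y²K[y]` and `γ ∈ C = A ∩ B`; explicitly,
`k(y) = (1/a)(h_n yⁿ + ⋯ + h₂y²)`. -/
theorem stmt_11 (K : Type*) [Field K]
    (φ : MvPolynomial (Fin 2) K ≃ₐ[K] MvPolynomial (Fin 2) K)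
    (a b b₁ : K) (h : Polynomial K) (ha : a ≠ 0) (hb : b ≠ 0)
    (hφ : φ.toAlgHom = triHom a h b b₁) :
    (∃! p : {k : Polynomial K // k.coeff 0 = 0 ∧ k.coeff 1 = 0} ×
          {γ : MvPolynomial (Fin 2) K ≃ₐ[K] MvPolynomial (Fin 2) K //
            IsAffine γ ∧ IsTriangular γ},
        φ.toAlgHom = (betaHom p.1.1).comp p.2.1.toAlgHom) ∧
    (∀ (k : Polynomial K)
        (γ : MvPolynomial (Fin 2) K ≃ₐ[K] MvPolynomial (Fin 2) K),
      k.coeff 0 = 0 → k.coeff 1 = 0 → IsAffine γ → IsTriangular γ →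
      φ.toAlgHom = (betaHom k).comp γ.toAlgHom →
      k = Polynomial.C a⁻¹ *
        (h - Polynomial.C (h.coeff 1) * Polynomial.X - Polynomial.C (h.coeff 0))) := by
  set k₀ : Polynomial K := Polynomial.C a⁻¹ *
    (h - Polynomial.C (h.coeff 1) * Polynomial.X - Polynomial.C (h.coeff 0)) with hk₀
  set g₀ : Polynomial K := Polynomial.C (h.coeff 1) * Polynomial.X + Polynomial.C (h.coeff 0)
    with hg₀
  have hak : Polynomial.C a * k₀
      = h - Polynomial.C (h.coeff 1) * Polynomial.X - Polynomial.C (h.coeff 0) := by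
    rw [hk₀, ← mul_assoc, ← Polynomial.C_mul, mul_inv_cancel₀ ha, Polynomial.C_1, one_mul]
  have hc0 : k₀.coeff 0 = 0 := by
    rw [hk₀]
    simp [Polynomial.coeff_C_mul, Polynomial.coeff_sub, Polynomial.coeff_C]
  have hc1 : k₀.coeff 1 = 0 := by
    rw [hk₀]
    simp [Polynomial.coeff_C_mul, Polynomial.coeff_sub, Polynomial.coeff_C]
  set γ : MvPolynomial (Fin 2) K ≃ₐ[K] MvPolynomial (Fin 2) K :=
    φ.trans (betaEquiv k₀).symm with hγdef
  have hγalg : γ.toAlgHom = (betaHom (-k₀)).comp φ.toAlgHom := rfl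
  have hγtri : γ.toAlgHom = triHom a g₀ b b₁ := by
    rw [hγalg, hφ]
    refine MvPolynomial.algHom_ext fun i => ?_
    have e := congrArg (Polynomial.aeval (X 1 : MvPolynomial (Fin 2) K)) hak
    simp [map_sub, map_mul] at e
    fin_cases i <;>
      simp [AlgHom.comp_apply, map_add, map_mul, map_neg, hg₀, mul_add]
    linear_combination -e
  have htriγ : IsTriangular γ := ⟨a, b, b₁, g₀, ha, hb, hγtri⟩
  have haffγ : IsAffine γ := by
    refine ⟨a, h.coeff 1, h.coeff 0, 0, b, b₁, by simpa using mul_ne_zero ha hb, ?_⟩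
    rw [hγtri]
    refine MvPolynomial.algHom_ext fun i => ?_
    fin_cases i <;> simp [hg₀, map_add, map_mul] <;> ring
  have hcomp : φ.toAlgHom = (betaHom k₀).comp γ.toAlgHom := by
    rw [hγalg, ← AlgHom.comp_assoc, betaHom_comp]
    simp [betaHom_zero]
  refine ⟨⟨⟨⟨k₀, hc0, hc1⟩, ⟨γ, haffγ, htriγ⟩⟩, hcomp, ?_⟩, ?_⟩
  · rintro ⟨⟨k', hk'0, hk'1⟩, ⟨γ', ha', ht'⟩⟩ heq'
    simp only at heq'
    rw [hφ] at heq'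
    have hk' : k' = k₀ := key_lemma a b b₁ h ha k' γ' hk'0 hk'1 ha' ht' heq'
    rw [hk'] at heq'
    have hBB : (betaHom k₀).comp γ'.toAlgHom = (betaHom k₀).comp γ.toAlgHom :=
      heq'.symm.trans (hφ.symm.trans hcomp)
    have hγγ : γ' = γ := by
      refine AlgEquiv.ext fun x => (betaEquiv k₀).injective ?_
      exact DFunLike.congr_fun hBB x
    exact Prod.ext (Subtype.ext hk') (Subtype.ext hγγ)
  · intro k γ' hk0 hk1 haff htri heq
    rw [hφ] at heq
    exact key_lemma a b b₁ h ha k γ' hk0 hk1 haff htri heq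
end

section
/- Let f ∈ K[x,y] be a coordinate with deg f > 1 over a field K, and suppose (f,g) and (f,g₁) are automorphisms with deg g < deg f and deg g₁ < deg f. Then g₁ = c·g + d for some nonzero c ∈ K and d ∈ K. -/
/-!
`θ = φ⁻¹ ∘ ψ` fixes `x`, so it is a `K[x]`-algebra automorphism of `K[x][y]`. Automorphisms of a
polynomial ring over a domain are affine (degrees multiply under composition), hence
`θ y = c y + b(x)` with `c` a unit. Applying `φ` gives `g₁ = c g + b(f)`, and since
`deg b(f) = deg b · deg f` while `deg (g₁ - c g) < deg f`, the polynomial `b` is constant.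
-/

open MvPolynomial Polynomial

namespace Polynomial

variable {R : Type*} [CommRing R]

theorem algEquiv_apply_eq_comp (τ : R[X] ≃ₐ[R] R[X]) (p : R[X]) : τ p = p.comp (τ X) := by
  rw [comp_eq_aeval, aeval_algHom_apply, aeval_X_left_apply]

theorem exists_isUnit_algEquiv_apply_X_eq [IsDomain R] (τ : R[X] ≃ₐ[R] R[X]) :
    ∃ a b : R, IsUnit a ∧ τ X = C a * X + C b := by
  have hcomp : (τ X).comp (τ.symm X) = X := by
    rw [← algEquiv_apply_eq_comp, AlgEquiv.symm_apply_apply]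
  have hdeg : (τ X).natDegree * (τ.symm X).natDegree = 1 := by
    rw [← natDegree_comp, hcomp, natDegree_X]
  have hdeg₁ : (τ X).natDegree = 1 := Nat.eq_one_of_mul_eq_one_right hdeg
  have hlead : (τ X).leadingCoeff * (τ.symm X).leadingCoeff ^ (τ X).natDegree = 1 := by
    rw [← leadingCoeff_comp (by rw [Nat.eq_one_of_mul_eq_one_left hdeg]; norm_num), hcomp,
      leadingCoeff_X]
  refine ⟨(τ X).coeff 1, (τ X).coeff 0, ?_, eq_X_add_C_of_natDegree_le_one hdeg₁.le⟩
  rw [← hdeg₁]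
  exact IsUnit.of_mul_eq_one _ hlead

end Polynomial

namespace MvPolynomial

variable {R σ : Type*}

theorem totalDegree_aeval_le [CommSemiring R] (f : MvPolynomial σ R) (p : R[X]) :
    (Polynomial.aeval f p).totalDegree ≤ p.natDegree * f.totalDegree := by
  rw [aeval_eq_sum_range]
  refine totalDegree_finsetSum_le fun i hi => (totalDegree_smul_le _ _).trans ?_
  exact (totalDegree_pow _ _).trans
    (Nat.mul_le_mul_right _ (Nat.lt_succ_iff.mp (Finset.mem_range.mp hi)))

section

variable [CommRing R] [IsDomain R]

theorem totalDegree_pow_of_isDomain {f : MvPolynomial σ R} (hf : f ≠ 0) (n : ℕ) :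
    (f ^ n).totalDegree = n * f.totalDegree := by
  induction n with
  | zero => simp
  | succ n ih =>
    rw [pow_succ, totalDegree_mul_of_isDomain (pow_ne_zero n hf) hf, ih, Nat.succ_mul]

theorem totalDegree_aeval (f : MvPolynomial σ R) (p : R[X]) :
    (Polynomial.aeval f p).totalDegree = p.natDegree * f.totalDegree := by
  rcases eq_or_ne f.totalDegree 0 with hf | hf
  · rw [totalDegree_eq_zero_iff_eq_C.mp hf, ← algebraMap_eq, Polynomial.aeval_algebraMap_apply]
    simp
  rcases eq_or_ne p.natDegree 0 with hp | hp
  · obtain ⟨a, rfl⟩ := natDegree_eq_zero.mp hp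
    simp
  have hf0 : f ≠ 0 := by rintro rfl; simp at hf
  have hp0 : p ≠ 0 := by rintro rfl; simp at hp
  have hlead : (C p.leadingCoeff * f ^ p.natDegree).totalDegree = p.natDegree * f.totalDegree := by
    rw [totalDegree_mul_of_isDomain (C_ne_zero.mpr (leadingCoeff_ne_zero.mpr hp0))
      (pow_ne_zero _ hf0), totalDegree_C, totalDegree_pow_of_isDomain hf0, zero_add]
  have htail : (Polynomial.aeval f p.eraseLead).totalDegree < p.natDegree * f.totalDegree := by
    rcases p.eraseLead_natDegree_lt_or_eraseLead_eq_zero with h | h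
    · exact (totalDegree_aeval_le _ _).trans_lt (Nat.mul_lt_mul_of_pos_right h (by omega))
    · rw [h, map_zero, totalDegree_zero]
      positivity
  conv_lhs => rw [← p.eraseLead_add_C_mul_X_pow]
  rw [map_add, map_mul, map_pow, Polynomial.aeval_C, Polynomial.aeval_X, algebraMap_eq,
    totalDegree_add_eq_right_of_totalDegree_lt (hlead ▸ htail), hlead]

end

section

variable (R) [CommSemiring R]

noncomputable def finTwoAlgEquiv : MvPolynomial (Fin 2) R ≃ₐ[R] R[X][X] :=
  AlgEquiv.ofAlgHom (aeval ![Polynomial.C Polynomial.X, Polynomial.X])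
    (Polynomial.aevalTower (Polynomial.aeval (R := R) (X 0 : MvPolynomial (Fin 2) R)) (X 1))
    (by
      ext : 1
      · ext : 1; simp
      · simp)
    (by ext i : 1; fin_cases i <;> simp)

@[simp] theorem finTwoAlgEquiv_X_zero : finTwoAlgEquiv R (X 0) = Polynomial.C Polynomial.X := by
  simp [finTwoAlgEquiv]

@[simp] theorem finTwoAlgEquiv_symm_C (p : R[X]) :
    (finTwoAlgEquiv R).symm (Polynomial.C p) = Polynomial.aeval (X 0) p := by
  simp [finTwoAlgEquiv]

@[simp] theorem finTwoAlgEquiv_symm_X : (finTwoAlgEquiv R).symm Polynomial.X = X 1 := by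
  simp [finTwoAlgEquiv]

end

section

variable [CommRing R] [IsDomain R]

theorem exists_isUnit_algEquiv_apply_X_one_eq
    (θ : MvPolynomial (Fin 2) R ≃ₐ[R] MvPolynomial (Fin 2) R) (hθ : θ (X 0) = X 0) :
    ∃ (c : R) (b : R[X]), IsUnit c ∧ θ (X 1) = C c * X 1 + Polynomial.aeval (X 0) b := by
  set E := finTwoAlgEquiv R
  set τ₀ := E.symm.trans (θ.trans E)
  have hτ₀C (p : R[X]) : τ₀ (Polynomial.C p) = Polynomial.C p := by
    have : (τ₀ : R[X][X] →ₐ[R] R[X][X]).comp CAlgHom = CAlgHom :=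
      Polynomial.algHom_ext (by simp [τ₀, E, hθ])
    exact DFunLike.congr_fun this p
  let τ : R[X][X] ≃ₐ[R[X]] R[X][X] := AlgEquiv.ofRingEquiv (f := τ₀.toRingEquiv) hτ₀C
  obtain ⟨a, b, ha, hτ⟩ := exists_isUnit_algEquiv_apply_X_eq τ
  obtain ⟨c, hc, rfl⟩ := Polynomial.isUnit_iff.mp ha
  refine ⟨c, b, hc, ?_⟩
  have : θ (X 1) = E.symm (τ Polynomial.X) := by simp [τ, τ₀, E]
  rw [this, hτ]
  simp [E, algebraMap_eq]

end

end MvPolynomial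

theorem stmt_17_general (K : Type*) [Field K]
    (φ ψ : MvPolynomial (Fin 2) K ≃ₐ[K] MvPolynomial (Fin 2) K)
    (hf : φ (X 0) = ψ (X 0))
    (hg : (φ (X 1)).totalDegree < (φ (X 0)).totalDegree)
    (hg1 : (ψ (X 1)).totalDegree < (φ (X 0)).totalDegree) :
    ∃ c d : K, c ≠ 0 ∧ ψ (X 1) = MvPolynomial.C c * φ (X 1) + MvPolynomial.C d := by
  obtain ⟨c, b, hc, hθ⟩ :=
    exists_isUnit_algEquiv_apply_X_one_eq (ψ.trans φ.symm) (by simp [← hf])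
  have hψ : ψ (X 1) = MvPolynomial.C c * φ (X 1) + Polynomial.aeval (φ (X 0)) b := by
    have := congrArg φ hθ
    rwa [AlgEquiv.trans_apply, AlgEquiv.apply_symm_apply, map_add, map_mul,
      ← MvPolynomial.algebraMap_eq, AlgEquiv.commutes, ← Polynomial.aeval_algHom_apply] at this
  have hb : b.natDegree = 0 := by
    have hlt : b.natDegree * (φ (X 0)).totalDegree < 1 * (φ (X 0)).totalDegree := by
      rw [one_mul, ← totalDegree_aeval, eq_sub_of_add_eq' hψ.symm]
      refine (totalDegree_sub _ _).trans_lt (max_lt hg1 ?_)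
      exact (totalDegree_mul _ _).trans_lt (by rwa [totalDegree_C, zero_add])
    exact Nat.lt_one_iff.mp (Nat.lt_of_mul_lt_mul_right hlt)
  obtain ⟨d, rfl⟩ := natDegree_eq_zero.mp hb
  exact ⟨c, d, hc.ne_zero, by simpa [MvPolynomial.algebraMap_eq] using hψ⟩

/-- If `f` is a coordinate of `K[x,y]` of degree `> 1` and `(f,g)`, `(f,g₁)` are
automorphisms with `deg g < deg f` and `deg g₁ < deg f`, then `g₁ = c·g + d` for some
`c ≠ 0` and `d` in `K`. -/
theorem stmt_17 (K : Type*) [Field K]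
    (φ ψ : MvPolynomial (Fin 2) K ≃ₐ[K] MvPolynomial (Fin 2) K)
    (hf : φ (X 0) = ψ (X 0))
    (hdeg : 1 < (φ (X 0)).totalDegree)
    (hg : (φ (X 1)).totalDegree < (φ (X 0)).totalDegree)
    (hg1 : (ψ (X 1)).totalDegree < (φ (X 0)).totalDegree) :
    ∃ c d : K, c ≠ 0 ∧ ψ (X 1) = MvPolynomial.C c * φ (X 1) + MvPolynomial.C d :=
  stmt_17_general K φ ψ hf hg hg1
end
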